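/- Let ε > 0, s ∈ (0, π/2), θ ∈ ℝ, and a, b ∈ ℝ with a² + b² < 1/(ε² sin 2s), and let y = T(s, θ, a, b). Then dist(y, Γ_ε) = √(a² + b²), and the distance is attained at the base point ((cos s/(ε√(sin 2s))) e^{iθ}, (sin s/(ε√(sin 2s))) e^{iθ}) ∈ Γ_ε. -/

import Mathlib

noncomputable section

open Complex Metric
open scoped Real

/-- ℂ² with the Euclidean (ℝ⁴) distance. -/
abbrev C2 : Type := EuclideanSpace ℂ (Fin 2)

/-- The point (z, w) ∈ ℂ². -/
def pt (z w : ℂ) : C2 := (WithLp.equiv 2 (Fin 2 → ℂ)).symm ![z, w]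

/-- The point of Γ with parameters (ρ, θ). -/
def gpt (ρ θ : ℝ) : C2 :=
  pt (((Real.sqrt 2 / 2 * ρ : ℝ) : ℂ) * Complex.exp ((θ : ℂ) * Complex.I))
     (((Real.sqrt 2 / 2 * ρ⁻¹ : ℝ) : ℂ) * Complex.exp ((θ : ℂ) * Complex.I))

/-- The special Lagrangian surface Γ ⊂ ℂ². -/
def Gam : Set C2 := {p | ∃ ρ θ : ℝ, 0 < ρ ∧ p = gpt ρ θ}

/-- The point (ρ₁ e^{iθ₁}, ρ₂ e^{iθ₂}) ∈ ℂ². -/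
def ppt (ρ₁ θ₁ ρ₂ θ₂ : ℝ) : C2 :=
  pt ((ρ₁ : ℂ) * Complex.exp ((θ₁ : ℂ) * Complex.I))
     ((ρ₂ : ℂ) * Complex.exp ((θ₂ : ℂ) * Complex.I))

/-- The point of Γ_ε with parameters (s, θ). -/
def gept (ε s θ : ℝ) : C2 :=
  pt (((Real.cos s / (ε * Real.sqrt (Real.sin (2 * s))) : ℝ) : ℂ)
        * Complex.exp ((θ : ℂ) * Complex.I))
     (((Real.sin s / (ε * Real.sqrt (Real.sin (2 * s))) : ℝ) : ℂ)
        * Complex.exp ((θ : ℂ) * Complex.I))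

/-- The rescaled surface Γ_ε = (1/ε)Γ. -/
def GamE (ε : ℝ) : Set C2 := {p | ∃ s θ : ℝ, s ∈ Set.Ioo 0 (π / 2) ∧ p = gept ε s θ}

/-- The Fermi (normal exponential) map around Γ_ε. -/
def fermiT (ε s θ a b : ℝ) : C2 :=
  pt (Complex.exp ((θ : ℂ) * Complex.I)
        * (((Real.cos s / (ε * Real.sqrt (Real.sin (2 * s))) : ℝ) : ℂ)
            + ((a : ℂ) - (b : ℂ) * Complex.I) * ((Real.sin s : ℝ) : ℂ)))
     (Complex.exp ((θ : ℂ) * Complex.I)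
        * (((Real.sin s / (ε * Real.sqrt (Real.sin (2 * s))) : ℝ) : ℂ)
            + ((a : ℂ) + (b : ℂ) * Complex.I) * ((Real.cos s : ℝ) : ℂ)))

/-! With R = 1/(ε√(sin 2s)), c = cos s, σ = sin s, a point of Γ_ε is e^{iθ'}(X, Y) with
XY = R²cσ. For φ = θ − θ', the squared distance from T(s, θ, a, b) to it exceeds a² + b² by
S − 2(U cos φ + V sin φ), where S, U, V are polynomials in R, c, σ, a, b, X, Y. By Cauchy–Schwarz
in (cos φ, sin φ) it suffices that S ≥ 0 and S² ≥ 4(U² + V²), and on the hyperbola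
S² − 4(U² + V²) = (R² − X² − Y²)² + 4(σX − cY)²(R² − a² − b²), which is where a² + b² < R² enters. -/

lemma dist_pt (z w z' w' : ℂ) :
    dist (pt z w) (pt z' w') = √(‖z - z'‖ ^ 2 + ‖w - w'‖ ^ 2) := by
  simp [EuclideanSpace.dist_eq, pt, Fin.sum_univ_two, Complex.dist_eq]

lemma norm_sub_sq_add_norm_sub_sq_eq (R c σ a b X Y θ θ' : ℝ) (hC : c ^ 2 + σ ^ 2 = 1) :
    ‖Complex.exp (θ * I) * ((R * c : ℝ) + (a - b * I) * (σ : ℂ)) - X * Complex.exp (θ' * I)‖ ^ 2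
      + ‖Complex.exp (θ * I) * ((R * σ : ℝ) + (a + b * I) * (c : ℂ)) - Y * Complex.exp (θ' * I)‖ ^ 2
      = a ^ 2 + b ^ 2 + (R ^ 2 + X ^ 2 + Y ^ 2 + 4 * a * R * c * σ)
        - 2 * (Real.cos (θ - θ') * (R * (c * X + σ * Y) + a * (σ * X + c * Y))
          + Real.sin (θ - θ') * (b * (σ * X - c * Y))) := by
  simp only [Complex.sq_norm, Complex.normSq_apply, Complex.sub_re, Complex.sub_im,
    Complex.add_re, Complex.add_im, Complex.mul_re, Complex.mul_im, Complex.ofReal_re,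
    Complex.ofReal_im, Complex.I_re, Complex.I_im, Complex.exp_ofReal_mul_I_re,
    Complex.exp_ofReal_mul_I_im, Real.cos_sub, Real.sin_sub]
  linear_combination ((R ^ 2 + a ^ 2 + b ^ 2) * (c ^ 2 + σ ^ 2) + 4 * a * R * c * σ)
      * Real.cos_sq_add_sin_sq θ + (R ^ 2 + a ^ 2 + b ^ 2) * hC
      + (X ^ 2 + Y ^ 2) * Real.cos_sq_add_sin_sq θ'

section FocalInequality

variable {R c σ a b X Y : ℝ}

lemma focal_identity (hC : c ^ 2 + σ ^ 2 = 1) (hXY : X * Y = R ^ 2 * (c * σ)) :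
    (R ^ 2 + X ^ 2 + Y ^ 2 + 4 * a * R * c * σ) ^ 2
      - 4 * ((R * (c * X + σ * Y) + a * (σ * X + c * Y)) ^ 2 + (b * (σ * X - c * Y)) ^ 2)
      = (R ^ 2 - X ^ 2 - Y ^ 2) ^ 2 + 4 * (σ * X - c * Y) ^ 2 * (R ^ 2 - a ^ 2 - b ^ 2) := by
  linear_combination (-4 * R ^ 2 * (X ^ 2 + Y ^ 2) - 8 * a * R * X * Y) * hC
    + (-8 * a * R - 16 * a ^ 2 * c * σ) * hXY

lemma focal_sum_nonneg (hR : 0 ≤ R) (hcσ : 0 ≤ c * σ) (hC : c ^ 2 + σ ^ 2 = 1)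
    (hXY : X * Y = R ^ 2 * (c * σ)) (ha : a ^ 2 ≤ R ^ 2) :
    0 ≤ R ^ 2 + X ^ 2 + Y ^ 2 + 4 * a * R * c * σ := by
  have hRa : 0 ≤ R + a := by linarith [(abs_le_of_sq_le_sq' ha hR).1]
  have hsum : R ^ 2 + X ^ 2 + Y ^ 2 + 4 * a * R * c * σ
      = 4 * (R * (c * σ)) * (R + a) + R ^ 2 * (c - σ) ^ 2 + (X - Y) ^ 2 := by
    linear_combination (-R ^ 2) * hC + 2 * hXY
  rw [hsum]
  positivity

lemma two_mul_cos_add_sin_le (φ : ℝ) (hR : 0 ≤ R) (hcσ : 0 ≤ c * σ) (hC : c ^ 2 + σ ^ 2 = 1)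
    (hXY : X * Y = R ^ 2 * (c * σ)) (hab : a ^ 2 + b ^ 2 ≤ R ^ 2) :
    2 * (Real.cos φ * (R * (c * X + σ * Y) + a * (σ * X + c * Y))
        + Real.sin φ * (b * (σ * X - c * Y)))
      ≤ R ^ 2 + X ^ 2 + Y ^ 2 + 4 * a * R * c * σ := by
  set U := R * (c * X + σ * Y) + a * (σ * X + c * Y)
  set V := b * (σ * X - c * Y)
  refine le_of_sq_le_sq ?_ (focal_sum_nonneg hR hcσ hC hXY (by nlinarith))
  have cauchy_schwarz : (Real.cos φ * U + Real.sin φ * V) ^ 2 ≤ U ^ 2 + V ^ 2 := by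
    nlinarith [sq_nonneg (Real.cos φ * V - Real.sin φ * U), Real.cos_sq_add_sin_sq φ]
  have hgap : 0 ≤ (R ^ 2 - X ^ 2 - Y ^ 2) ^ 2 + 4 * (σ * X - c * Y) ^ 2 * (R ^ 2 - a ^ 2 - b ^ 2) :=
    add_nonneg (sq_nonneg _) (mul_nonneg (by positivity) (by linarith))
  nlinarith [focal_identity (a := a) (b := b) hC hXY]

end FocalInequality

lemma sin_two_mul_pos_of_mem_Ioo {s : ℝ} (hs : s ∈ Set.Ioo 0 (π / 2)) : 0 < Real.sin (2 * s) :=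
  Real.sin_pos_of_pos_of_lt_pi (by linarith [hs.1]) (by linarith [hs.2])

lemma inv_mul_sqrt_sq (ε : ℝ) {t : ℝ} (ht : 0 ≤ t) : (ε * √t)⁻¹ ^ 2 = 1 / (ε ^ 2 * t) := by
  rw [inv_pow, mul_pow, Real.sq_sqrt ht, one_div]

lemma inv_sq_mul_cos_mul_sin {ε s : ℝ} (hε : ε ≠ 0) (hs : 0 < Real.sin (2 * s)) :
    (ε * √(Real.sin (2 * s)))⁻¹ ^ 2 * (Real.cos s * Real.sin s) = 1 / (2 * ε ^ 2) := by
  have hcs : Real.cos s * Real.sin s ≠ 0 := by linarith [Real.sin_two_mul s]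
  have hc := left_ne_zero_of_mul hcs
  have hσ := right_ne_zero_of_mul hcs
  rw [inv_mul_sqrt_sq ε hs.le, Real.sin_two_mul]
  field_simp

lemma dist_fermiT_gept (ε s θ a b : ℝ) :
    dist (fermiT ε s θ a b) (gept ε s θ) = √(a ^ 2 + b ^ 2) := by
  simp only [fermiT, gept, dist_pt, div_eq_inv_mul]
  rw [norm_sub_sq_add_norm_sub_sq_eq _ _ _ _ _ _ _ _ _ (Real.cos_sq_add_sin_sq s), sub_self,
    Real.cos_zero, Real.sin_zero]
  congr 1
  linear_combination (-(ε * √(Real.sin (2 * s)))⁻¹ ^ 2) * Real.cos_sq_add_sin_sq s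

lemma sqrt_le_dist_fermiT {ε s θ a b : ℝ} (hε : 0 < ε) (hs : 0 < Real.sin (2 * s))
    (hab : a ^ 2 + b ^ 2 < 1 / (ε ^ 2 * Real.sin (2 * s))) {y : C2} (hy : y ∈ GamE ε) :
    √(a ^ 2 + b ^ 2) ≤ dist (fermiT ε s θ a b) y := by
  obtain ⟨s', θ', hs', rfl⟩ := hy
  have hcσ : 0 ≤ Real.cos s * Real.sin s := by linarith [Real.sin_two_mul s]
  have hXY : (ε * √(Real.sin (2 * s')))⁻¹ * Real.cos s' * ((ε * √(Real.sin (2 * s')))⁻¹ * Real.sin s')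
      = (ε * √(Real.sin (2 * s)))⁻¹ ^ 2 * (Real.cos s * Real.sin s) := by
    linear_combination inv_sq_mul_cos_mul_sin hε.ne' (sin_two_mul_pos_of_mem_Ioo hs')
      - inv_sq_mul_cos_mul_sin hε.ne' hs
  rw [← inv_mul_sqrt_sq ε hs.le] at hab
  have key := two_mul_cos_add_sin_le (θ - θ') (by positivity) hcσ (Real.cos_sq_add_sin_sq s)
    hXY hab.le
  simp only [fermiT, gept, dist_pt, div_eq_inv_mul]
  refine Real.sqrt_le_sqrt ?_
  rw [norm_sub_sq_add_norm_sub_sq_eq _ _ _ _ _ _ _ _ _ (Real.cos_sq_add_sin_sq s)]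
  linarith

theorem fermi_dist_eq (ε s θ a b : ℝ) (hε : 0 < ε) (hs : s ∈ Set.Ioo 0 (π / 2))
    (hab : a ^ 2 + b ^ 2 < 1 / (ε ^ 2 * Real.sin (2 * s))) :
    Metric.infDist (fermiT ε s θ a b) (GamE ε) = Real.sqrt (a ^ 2 + b ^ 2) ∧
    dist (fermiT ε s θ a b) (gept ε s θ)
      = Metric.infDist (fermiT ε s θ a b) (GamE ε) := by
  have hbase : gept ε s θ ∈ GamE ε := ⟨s, θ, hs, rfl⟩
  have hinf : infDist (fermiT ε s θ a b) (GamE ε) = √(a ^ 2 + b ^ 2) :=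
    le_antisymm (dist_fermiT_gept ε s θ a b ▸ infDist_le_dist_of_mem hbase)
      ((le_infDist ⟨_, hbase⟩).2 fun _ ↦
        sqrt_le_dist_fermiT hε (sin_two_mul_pos_of_mem_Ioo hs) hab)
  exact ⟨hinf, (dist_fermiT_gept ε s θ a b).trans hinf.symm⟩

end
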